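/- For every morphism f = (a,x̄,i,j) of C_m, the set of factorizations of f is finite; that is, the set of pairs of composable morphisms (g,h) of C_m with g∘h = f is a finite set. -/
import Mathlib


/-- A (potential) morphism `(a, x̄, i, j)` of the category `C_m`:
it goes from the object `(x̄, i)` to the object `(x̄ + ā, j)`. -/
structure CmMor (m : ℕ) where
  a : ℤ
  x : ZMod m
  i : ℤ
  j : ℤ
deriving DecidableEq

/-- `(a, x̄, i, j)` really is a morphism of `C_m`:
the objects `(x̄, i)`, `(x̄ + ā, j)` exist (`i, j ≤ 0`) and `0 ≤ a ≤ i - j`. -/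
def CmValid (m : ℕ) (f : CmMor m) : Prop :=
  f.i ≤ 0 ∧ f.j ≤ 0 ∧ 0 ≤ f.a ∧ f.a ≤ f.i - f.j

/-- The source object of a morphism of `C_m`. -/
def CmSrc (m : ℕ) (f : CmMor m) : ZMod m × ℤ := (f.x, f.i)

/-- The target object of a morphism of `C_m`. -/
def CmTgt (m : ℕ) (f : CmMor m) : ZMod m × ℤ := (f.x + (f.a : ZMod m), f.j)

/-- `g` may be composed after `f` (target of `f` = source of `g`). -/
def CmComposable (m : ℕ) (f g : CmMor m) : Prop :=
  g.x = f.x + (f.a : ZMod m) ∧ g.i = f.j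

/-- The composite `g ∘ f` in `C_m`: `(b, ȳ, j, k) ∘ (a, x̄, i, j) = (a + b, x̄, i, k)`. -/
def CmComp (m : ℕ) (g f : CmMor m) : CmMor m :=
  ⟨f.a + g.a, f.x, f.i, g.j⟩

/-- The identity morphism `(0, x̄, i, i)` of the object `(x̄, i)` of `C_m`. -/
def CmId (m : ℕ) (x : ZMod m) (i : ℤ) : CmMor m := ⟨0, x, i, i⟩

/-- For every morphism `f = (a, x̄, i, j)` of `C_m`, the set of factorizations of
`f`, i.e. the set of pairs `(g, h)` of composable morphisms of `C_m` with
`g ∘ h = f`, is finite. -/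
theorem stmt2 (m : ℕ) (hm : 1 < m) (f : CmMor m) (hf : CmValid m f) :
    {p : CmMor m × CmMor m | CmValid m p.1 ∧ CmValid m p.2 ∧
      CmComposable m p.2 p.1 ∧ CmComp m p.1 p.2 = f}.Finite := by
  apply Set.Finite.subset
    (((Set.finite_Icc (0:ℤ) f.a).prod (Set.finite_Icc f.j 0)).image
      (fun q : ℤ × ℤ =>
        ((⟨q.1, f.x + ((f.a - q.1 : ℤ) : ZMod m), q.2, f.j⟩ : CmMor m),
         (⟨f.a - q.1, f.x, f.i, q.2⟩ : CmMor m))))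
  rintro ⟨g, h⟩ ⟨⟨hgi, hgj, hga, hgab⟩, ⟨hhi, hhj, hha, hhab⟩, ⟨hcx, hci⟩, hcomp⟩
  dsimp only at hgi hgj hga hgab hhi hhj hha hhab hcx hci hcomp
  have e1 : h.a + g.a = f.a := by rw [← hcomp]; rfl
  have e2 : h.x = f.x := by rw [← hcomp]; rfl
  have e3 : h.i = f.i := by rw [← hcomp]; rfl
  have e4 : g.j = f.j := by rw [← hcomp]; rfl
  refine ⟨(g.a, g.i), ⟨⟨hga, by omega⟩, ⟨by omega, by omega⟩⟩, ?_⟩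
  have hax : g.x = f.x + ((f.a - g.a : ℤ) : ZMod m) := by
    rw [hcx, e2]; congr 1; congr 1; omega
  simp only [Prod.mk.injEq]
  constructor
  · obtain ⟨ga, gx, gi, gj⟩ := g; simp_all
  · obtain ⟨ha, hx, hi, hj⟩ := h; simp_all; omega
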